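/- Let n ≥ 1, m = 2n, and let C ∈ ℂ^{2n×4n} be a normalized system of boundary conditions of rank 2n that is dissipative. Let C^{sa} ∈ ℂ^{2n×4n} be the truncated system obtained from C by keeping in each row only the leading-pair entries and replacing all other entries by 0 (i.e. C^{sa}_{j,k} = C_{j,k} if k = k_j or k = 2n + k_j, where k_j is the order of row j, and C^{sa}_{j,k} = 0 otherwise). Then the truncated conditions are self-adjoint: q_J(v) − q_J(u) = 0 for every (u,v) ∈ ℂ^{2n}×ℂ^{2n} satisfying Σ_{k=0}^{2n−1} C^{sa}_{j,k}u_k + C^{sa}_{j,2n+k}v_k = 0 for all rows j. -/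

import Mathlib

/-!
The leading-pair conditions are the limit as `t → 0⁺` of the systems
`diag(t^{k_j}) · C · diag(t^{-k})`, whose kernels are the images of `ker C` under
`diag(t^k)`. Since `q_J(v) − q_J(u)` is homogeneous of degree `2n − 1` under this rescaling,
it stays nonnegative on these kernels. Normalization gives the truncated system full row rank,
so each vector of its kernel is a limit of vectors of the nearby kernels, and the form is
nonnegative on `ker C^{sa}` as well.

The truncated conditions couple only `u_k` and `v_k` with the same `k`, so `ker C^{sa}` is
invariant under scaling the `k`-th coordinates by integers `a_k`; this multiplies the `p`-th term
of the form by `a_p a_{2n−1−p}`. Masks supported on `{p, 2n−1−p}` with signs `(1, ±1)` show that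
the terms at `p` and `2n−1−p` cancel, so the form vanishes.
-/

open ComplexOrder

/-- A system of boundary conditions of order `2n` is a matrix `C ∈ ℂ^{2n×4n}`; we index
the `4n` columns by `Fin (2n) ⊕ Fin (2n)`: `Sum.inl k` is the coefficient of `y^{(k)}(0)`
and `Sum.inr k` that of `y^{(k)}(1)`.  The order of row `j` is the largest `k` with
`(C_{j,k}, C_{j,2n+k}) ≠ (0,0)`. -/
noncomputable def rowOrder {m : ℕ} (C : Matrix (Fin m) (Fin m ⊕ Fin m) ℂ) (j : Fin m) : ℕ :=
  sSup {k : ℕ | ∃ h : k < m, C j (Sum.inl ⟨k, h⟩) ≠ 0 ∨ C j (Sum.inr ⟨k, h⟩) ≠ 0}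

/-- The leading pair `(α_j, β_j) = (C_{j,k_j}, C_{j,m+k_j})` of row `j`. -/
noncomputable def leadingPair {m : ℕ} (C : Matrix (Fin m) (Fin m ⊕ Fin m) ℂ) (j : Fin m) :
    ℂ × ℂ :=
  if h : rowOrder C j < m then
    (C j (Sum.inl ⟨rowOrder C j, h⟩), C j (Sum.inr ⟨rowOrder C j, h⟩))
  else 0

/-- The system `C` is normalized if, for every value `k`, the leading pairs of the rows
of order `k` are linearly independent in `ℂ²`. -/
def IsNormalized {m : ℕ} (C : Matrix (Fin m) (Fin m ⊕ Fin m) ℂ) : Prop :=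
  ∀ k : ℕ, LinearIndependent ℂ (fun j : {j : Fin m // rowOrder C j = k} => leadingPair C j.1)

/-- The quadratic form `q_J(u) = i·(−1)^{n+1} · Σ_{p=0}^{2n−1} (−1)^{p+1} u_p·conj(u_{2n−1−p})`. -/
noncomputable def qJ (n : ℕ) (u : Fin (2 * n) → ℂ) : ℂ :=
  Complex.I * (-1 : ℂ) ^ (n + 1) *
    ∑ p : Fin (2 * n), (-1 : ℂ) ^ ((p : ℕ) + 1) * u p * (starRingEnd ℂ) (u p.rev)

/-- The system `C` is dissipative if `q_J(v) − q_J(u) ≥ 0` for every `(u,v)` satisfying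
`Σ_k C_{j,k}u_k + C_{j,2n+k}v_k = 0` for all rows `j` (dissipativity of the operator
generated by `l₀(y) = (−i)^{2n}y^{(2n)}` and these boundary conditions). -/
def IsDissipativeBC (n : ℕ) (C : Matrix (Fin (2 * n)) (Fin (2 * n) ⊕ Fin (2 * n)) ℂ) : Prop :=
  ∀ u v : Fin (2 * n) → ℂ,
    (∀ j, ∑ k, (C j (Sum.inl k) * u k + C j (Sum.inr k) * v k) = 0) →
    0 ≤ qJ n v - qJ n u

open Matrix Filter Topology

theorem Matrix.exists_mul_eq_one_of_linearIndependent_row {m n K : Type*} [Fintype m]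
    [DecidableEq m] [Fintype n] [Field K] {A : Matrix m n K} (hA : LinearIndependent K A.row) :
    ∃ B : Matrix n m K, A * B = 1 := by
  have hrange : LinearMap.range A.mulVecLin = ⊤ := Submodule.eq_top_of_finrank_eq <| by
    rw [← Matrix.rank, hA.rank_matrix, Module.finrank_fintype_fun_eq_card]
  exact mulVec_surjective_iff_exists_right_inverse.1 (LinearMap.range_eq_top.1 hrange)

theorem Matrix.mulVec_apply_sum_type {ι κ R : Type*} [Fintype κ] [NonUnitalNonAssocSemiring R]
    (M : Matrix ι (κ ⊕ κ) R) (w : κ ⊕ κ → R) (j : ι) :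
    (M *ᵥ w) j = ∑ k, (M j (Sum.inl k) * w (Sum.inl k) + M j (Sum.inr k) * w (Sum.inr k)) := by
  rw [mulVec, dotProduct, Fintype.sum_sum_type, Finset.sum_add_distrib]

theorem Matrix.exists_tendsto_mulVec_eq_zero {α m n 𝕜 : Type*} [Fintype m] [DecidableEq m]
    [Fintype n] [Field 𝕜] [TopologicalSpace 𝕜] [IsTopologicalRing 𝕜] [ContinuousInv₀ 𝕜]
    [T1Space 𝕜]
    {l : Filter α} {A : α → Matrix m n 𝕜} {A₀ : Matrix m n 𝕜} {B : Matrix n m 𝕜}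
    (hA : Tendsto A l (𝓝 A₀)) (hAB : A₀ * B = 1) {w : n → 𝕜} (hw : A₀ *ᵥ w = 0) :
    ∃ F : α → n → 𝕜, Tendsto F l (𝓝 w) ∧ ∀ᶠ i in l, A i *ᵥ F i = 0 := by
  have hM : Tendsto (fun i => A i * B) l (𝓝 1) :=
    hAB ▸ ((continuous_id.matrix_mul continuous_const).tendsto A₀).comp hA
  have hMinv : Tendsto (fun i => (A i * B)⁻¹) l (𝓝 1) := by
    have hinv := continuousAt_matrix_inv (1 : Matrix m m 𝕜)
      (by simpa [Ring.inverse_eq_inv'] using continuousAt_inv₀ (one_ne_zero (α := 𝕜)))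
    exact (by simpa using hinv.tendsto : Tendsto Inv.inv (𝓝 1) (𝓝 (1 : Matrix m m 𝕜))).comp hM
  have hdet : ∀ᶠ i in l, IsUnit (A i * B).det := by
    have : Tendsto (fun i => (A i * B).det) l (𝓝 (1 : Matrix m m 𝕜).det) :=
      (continuous_id.matrix_det.tendsto _).comp hM
    rw [det_one] at this
    exact (this.eventually_ne one_ne_zero).mono fun _ h => isUnit_iff_ne_zero.2 h
  have hΦ : Continuous fun p : Matrix m n 𝕜 × Matrix m m 𝕜 => w - B *ᵥ (p.2 *ᵥ (p.1 *ᵥ w)) :=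
    continuous_const.sub <| continuous_const.matrix_mulVec <|
      continuous_snd.matrix_mulVec <| continuous_fst.matrix_mulVec continuous_const
  refine ⟨fun i => w - B *ᵥ ((A i * B)⁻¹ *ᵥ (A i *ᵥ w)), ?_, ?_⟩
  · simpa only [Function.comp_def, one_mulVec, hw, mulVec_zero, sub_zero] using
      (hΦ.tendsto (A₀, 1)).comp (hA.prodMk_nhds hMinv)
  · filter_upwards [hdet] with i hi
    rw [mulVec_sub, mulVec_mulVec, mulVec_mulVec, mul_nonsing_inv _ hi,
      one_mulVec, sub_self]

theorem Fin.rev_ne_self_of_two_mul {n : ℕ} (p : Fin (2 * n)) : p.rev ≠ p := by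
  rw [Ne, Fin.ext_iff, Fin.val_rev]
  omega

theorem Fin.val_add_val_rev {n : ℕ} (p : Fin (2 * n)) : (p : ℕ) + p.rev = 2 * n - 1 := by
  rw [Fin.val_rev]
  omega

theorem sum_eq_zero_of_forall_sum_zsmul_involution_nonneg {ι M : Type*} [Fintype ι]
    [AddCommGroup M] [PartialOrder M] [IsOrderedAddMonoid M] {r : ι → ι}
    (hr : Function.Involutive r) (hr' : ∀ p, r p ≠ p) {T : ι → M}
    (h : ∀ a : ι → ℤ, 0 ≤ ∑ p, (a p * a (r p)) • T p) : ∑ p, T p = 0 := by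
  classical
  have pair : ∀ p, T p + T (r p) = 0 := by
    intro p
    let a (s : ℤ) : ι → ℤ := fun q => if q = p then 1 else if q = r p then s else 0
    have mask (s : ℤ) : ∑ q, (a s q * a s (r q)) • T q = s • (T p + T (r p)) := by
      rw [Fintype.sum_eq_add p (r p) (hr' p).symm]
      · simp [a, hr p, hr' p, smul_add]
      · rintro q ⟨hqp, hqr⟩
        simp [a, hqp, hqr]
    apply le_antisymm
    · exact neg_nonneg.1 (by simpa only [mask, neg_one_zsmul] using h (a (-1)))
    · simpa only [mask, one_zsmul] using h (a 1)
  exact Finset.sum_ninvolution r pair (fun p _ => hr' p) (fun _ => Finset.mem_univ _) hr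

section TruncatedSystem

variable {m : ℕ} {C : Matrix (Fin m) (Fin m ⊕ Fin m) ℂ}

def colOrder (c : Fin m ⊕ Fin m) : Fin m := c.elim id id

noncomputable def truncate (C : Matrix (Fin m) (Fin m ⊕ Fin m) ℂ) :
    Matrix (Fin m) (Fin m ⊕ Fin m) ℂ :=
  Matrix.of fun j c => if (colOrder c : ℕ) = rowOrder C j then C j c else 0

/-- For `t ≠ 0` this is `diag(t^{k_j}) · C · diag(t^{-k})`; the truncated subtraction is
harmless because `C j c = 0` whenever `colOrder c > rowOrder C j`. -/
noncomputable def deformation (C : Matrix (Fin m) (Fin m ⊕ Fin m) ℂ) (t : ℝ) :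
    Matrix (Fin m) (Fin m ⊕ Fin m) ℂ :=
  Matrix.of fun j c => (t : ℂ) ^ (rowOrder C j - colOrder c) * C j c

theorem apply_eq_zero_of_rowOrder_lt {j : Fin m} {c : Fin m ⊕ Fin m}
    (h : rowOrder C j < colOrder c) : C j c = 0 := by
  have hbdd : BddAbove
      {k : ℕ | ∃ h : k < m, C j (Sum.inl ⟨k, h⟩) ≠ 0 ∨ C j (Sum.inr ⟨k, h⟩) ≠ 0} :=
    ⟨m, fun k ⟨hk, _⟩ => hk.le⟩
  by_contra hne
  refine h.not_ge (le_csSup hbdd ⟨(colOrder c).isLt, ?_⟩)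
  rcases c with k | k
  exacts [Or.inl hne, Or.inr hne]

theorem IsNormalized.leadingPair_ne_zero (hC : IsNormalized C) (j : Fin m) :
    leadingPair C j ≠ 0 :=
  (hC (rowOrder C j)).ne_zero ⟨j, rfl⟩

theorem IsNormalized.rowOrder_lt (hC : IsNormalized C) (j : Fin m) : rowOrder C j < m := by
  by_contra h
  exact hC.leadingPair_ne_zero j (dif_neg h)

theorem leadingPair_eq_of_rowOrder_eq {j k : Fin m} (hj : rowOrder C j = k) :
    leadingPair C j = (C j (Sum.inl k), C j (Sum.inr k)) := by
  rw [leadingPair, dif_pos (hj ▸ k.isLt)]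
  congr

theorem IsNormalized.linearIndependent_truncate_row (hC : IsNormalized C) :
    LinearIndependent ℂ (truncate C).row := by
  rw [Fintype.linearIndependent_iff]
  intro g hg j₀
  set k : Fin m := ⟨rowOrder C j₀, hC.rowOrder_lt j₀⟩
  have hcol (c : Fin m ⊕ Fin m) (hc : colOrder c = k) :
      ∑ j : {j // rowOrder C j = k}, g j * C j c = 0 := by
    have := congr_fun hg c
    simp only [Finset.sum_apply, Pi.smul_apply, row, truncate, of_apply, smul_eq_mul, mul_ite,
      mul_zero, hc, Pi.zero_apply, eq_comm (a := (k : ℕ))] at this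
    rw [← this, ← Finset.sum_filter, eq_comm]
    exact Finset.sum_subtype _ (fun j => by simp) _
  refine Fintype.linearIndependent_iff.1 (hC k) (fun j => g j) ?_ ⟨j₀, rfl⟩
  simp only [fun j : {j // rowOrder C j = k} => leadingPair_eq_of_rowOrder_eq j.2, Prod.smul_mk,
    smul_eq_mul]
  ext
  · simpa [Prod.fst_sum] using hcol (Sum.inl k) rfl
  · simpa [Prod.snd_sum] using hcol (Sum.inr k) rfl

theorem deformation_zero : deformation C 0 = truncate C := by
  ext j c
  simp only [deformation, truncate, of_apply, Complex.ofReal_zero]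
  rcases lt_trichotomy (colOrder c : ℕ) (rowOrder C j) with h | h | h
  · rw [zero_pow (by omega), zero_mul, if_neg h.ne]
  · rw [if_pos h, h, Nat.sub_self, pow_zero, one_mul]
  · rw [apply_eq_zero_of_rowOrder_lt h, mul_zero, ite_self]

theorem continuous_deformation : Continuous (deformation C) :=
  continuous_matrix fun j c => by simp only [deformation, of_apply]; fun_prop

theorem deformation_mulVec_pow_mul (t : ℝ) (x : Fin m ⊕ Fin m → ℂ) :
    deformation C t *ᵥ (fun c => (t : ℂ) ^ (colOrder c : ℕ) * x c) =
      fun j => (t : ℂ) ^ rowOrder C j * (C *ᵥ x) j := by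
  funext j
  simp only [mulVec, dotProduct, deformation, of_apply, Finset.mul_sum]
  refine Finset.sum_congr rfl fun c _ => ?_
  by_cases h : (colOrder c : ℕ) ≤ rowOrder C j
  · rw [← pow_sub_mul_pow _ h]
    ring
  · rw [apply_eq_zero_of_rowOrder_lt (not_le.1 h)]
    ring

theorem truncate_mulVec_mul_eq_zero {w : Fin m ⊕ Fin m → ℂ} (hw : truncate C *ᵥ w = 0)
    (a : Fin m → ℂ) : truncate C *ᵥ (fun c => a (colOrder c) * w c) = 0 := by
  funext j
  by_cases hj : rowOrder C j < m
  · calc (truncate C *ᵥ fun c => a (colOrder c) * w c) j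
        = a ⟨rowOrder C j, hj⟩ * (truncate C *ᵥ w) j := by
          simp only [mulVec, dotProduct, Finset.mul_sum]
          refine Finset.sum_congr rfl fun c _ => ?_
          by_cases hc : (colOrder c : ℕ) = rowOrder C j
          · rw [show colOrder c = ⟨rowOrder C j, hj⟩ from Fin.ext hc]
            ring
          · simp [truncate, hc]
      _ = 0 := by rw [hw, Pi.zero_apply, mul_zero]
  · simp only [mulVec, dotProduct, Pi.zero_apply]
    refine Finset.sum_eq_zero fun c _ => ?_
    have : (colOrder c : ℕ) ≠ rowOrder C j := by have := (colOrder c).isLt; omega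
    simp [truncate, this]

end TruncatedSystem

section BoundaryForm

variable {n : ℕ}

noncomputable def boundaryForm (n : ℕ) (w : Fin (2 * n) ⊕ Fin (2 * n) → ℂ) : ℂ :=
  qJ n (w ∘ Sum.inr) - qJ n (w ∘ Sum.inl)

noncomputable def boundaryTerm (n : ℕ) (w : Fin (2 * n) ⊕ Fin (2 * n) → ℂ) (p : Fin (2 * n)) :
    ℂ :=
  Complex.I * (-1) ^ (n + 1) * ((-1) ^ ((p : ℕ) + 1) *
    (w (Sum.inr p) * starRingEnd ℂ (w (Sum.inr p.rev)) -
      w (Sum.inl p) * starRingEnd ℂ (w (Sum.inl p.rev))))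

theorem boundaryForm_eq_sum (w : Fin (2 * n) ⊕ Fin (2 * n) → ℂ) :
    boundaryForm n w = ∑ p, boundaryTerm n w p := by
  rw [boundaryForm, qJ, qJ, ← mul_sub, ← Finset.sum_sub_distrib, Finset.mul_sum]
  refine Finset.sum_congr rfl fun p _ => ?_
  simp only [boundaryTerm, Function.comp_apply]
  ring

theorem boundaryForm_mul_ofReal (a : Fin (2 * n) → ℝ) (w : Fin (2 * n) ⊕ Fin (2 * n) → ℂ) :
    boundaryForm n (fun c => (a (colOrder c) : ℂ) * w c) =
      ∑ p, ((a p * a p.rev : ℝ) : ℂ) * boundaryTerm n w p := by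
  rw [boundaryForm_eq_sum]
  refine Finset.sum_congr rfl fun p _ => ?_
  simp only [boundaryTerm, colOrder, Sum.elim_inl, Sum.elim_inr, id, map_mul,
    Complex.conj_ofReal, Complex.ofReal_mul]
  ring

theorem boundaryForm_pow_mul (t : ℝ) (x : Fin (2 * n) ⊕ Fin (2 * n) → ℂ) :
    boundaryForm n (fun c => (t : ℂ) ^ (colOrder c : ℕ) * x c) =
      ((t ^ (2 * n - 1) : ℝ) : ℂ) * boundaryForm n x := by
  have h := boundaryForm_mul_ofReal (fun k => t ^ (k : ℕ)) x
  push_cast at h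
  simp only [← pow_add, Fin.val_add_val_rev] at h
  rw [h, boundaryForm_eq_sum, Finset.mul_sum]
  push_cast
  rfl

theorem continuous_boundaryForm : Continuous (boundaryForm n) := by
  unfold boundaryForm qJ
  fun_prop

theorem IsDissipativeBC.boundaryForm_nonneg
    {C : Matrix (Fin (2 * n)) (Fin (2 * n) ⊕ Fin (2 * n)) ℂ} (hdiss : IsDissipativeBC n C)
    {w : Fin (2 * n) ⊕ Fin (2 * n) → ℂ} (hw : C *ᵥ w = 0) :
    0 ≤ boundaryForm n w :=
  hdiss _ _ fun j => (mulVec_apply_sum_type C w j).symm.trans (congr_fun hw j)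

theorem IsDissipativeBC.boundaryForm_nonneg_of_truncate_mulVec_eq_zero
    {C : Matrix (Fin (2 * n)) (Fin (2 * n) ⊕ Fin (2 * n)) ℂ} (hdiss : IsDissipativeBC n C)
    (hC : IsNormalized C) {w : Fin (2 * n) ⊕ Fin (2 * n) → ℂ} (hw : truncate C *ᵥ w = 0) :
    0 ≤ boundaryForm n w := by
  obtain ⟨B, hB⟩ := exists_mul_eq_one_of_linearIndependent_row hC.linearIndependent_truncate_row
  have hA : Tendsto (deformation C) (𝓝[>] 0) (𝓝 (truncate C)) :=
    deformation_zero (C := C) ▸ continuous_deformation.continuousWithinAt.tendsto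
  obtain ⟨F, hFw, hF⟩ := exists_tendsto_mulVec_eq_zero hA hB hw
  refine ge_of_tendsto ((continuous_boundaryForm.tendsto w).comp hFw) ?_
  filter_upwards [hF, self_mem_nhdsWithin] with t hFt (ht : 0 < t)
  have htC : (t : ℂ) ≠ 0 := Complex.ofReal_ne_zero.2 ht.ne'
  set x : Fin (2 * n) ⊕ Fin (2 * n) → ℂ := fun c => ((t : ℂ) ^ (colOrder c : ℕ))⁻¹ * F t c
  have hFx : F t = fun c => (t : ℂ) ^ (colOrder c : ℕ) * x c := by
    funext c
    rw [mul_inv_cancel_left₀ (pow_ne_zero _ htC)]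
  have hx : C *ᵥ x = 0 := by
    funext j
    have := congr_fun (deformation_mulVec_pow_mul (C := C) t x) j
    rw [← hFx, hFt] at this
    exact (mul_eq_zero.1 this.symm).resolve_left (pow_ne_zero _ htC)
  rw [Function.comp_apply, hFx, boundaryForm_pow_mul]
  exact mul_nonneg (Complex.zero_le_real.2 (pow_nonneg ht.le _)) (hdiss.boundaryForm_nonneg hx)

end BoundaryForm

theorem stmt17_general (n : ℕ)
    (C : Matrix (Fin (2 * n)) (Fin (2 * n) ⊕ Fin (2 * n)) ℂ)
    (hnorm : IsNormalized C) (hdiss : IsDissipativeBC n C) :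
    ∀ u v : Fin (2 * n) → ℂ,
      (∀ j, ∑ k : Fin (2 * n),
          ((if k.val = rowOrder C j then C j (Sum.inl k) else 0) * u k
            + (if k.val = rowOrder C j then C j (Sum.inr k) else 0) * v k) = 0) →
      qJ n v - qJ n u = 0 := by
  intro u v hsa
  have hw : truncate C *ᵥ Sum.elim u v = 0 :=
    funext fun j => (mulVec_apply_sum_type _ _ j).trans (hsa j)
  change boundaryForm n (Sum.elim u v) = 0
  rw [boundaryForm_eq_sum]
  refine sum_eq_zero_of_forall_sum_zsmul_involution_nonneg Fin.rev_involutive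
    Fin.rev_ne_self_of_two_mul fun a => ?_
  have hmasked := hdiss.boundaryForm_nonneg_of_truncate_mulVec_eq_zero hnorm
    (truncate_mulVec_mul_eq_zero hw fun k => ((a k : ℝ) : ℂ))
  rw [boundaryForm_mul_ofReal (fun k => (a k : ℝ))] at hmasked
  simpa [zsmul_eq_mul] using hmasked

/-- for a normalized dissipative rank-`2n` system `C`, the truncated
system `C^{sa}` keeping only the leading-pair entries of each row (all other entries
replaced by `0`) is self-adjoint: `q_J(v) − q_J(u) = 0` on its kernel. -/
theorem stmt17 (n : ℕ) (hn : 1 ≤ n)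
    (C : Matrix (Fin (2 * n)) (Fin (2 * n) ⊕ Fin (2 * n)) ℂ)
    (hrank : C.rank = 2 * n) (hnorm : IsNormalized C) (hdiss : IsDissipativeBC n C) :
    ∀ u v : Fin (2 * n) → ℂ,
      (∀ j, ∑ k : Fin (2 * n),
          ((if k.val = rowOrder C j then C j (Sum.inl k) else 0) * u k
            + (if k.val = rowOrder C j then C j (Sum.inr k) else 0) * v k) = 0) →
      qJ n v - qJ n u = 0 :=
  stmt17_general n C hnorm hdiss
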